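/- Let D ⊂ ℝᵈ be finite, let ℓ ≥ 0, and consider one iteration of the k-means-- style update: given centroids C_{i−1}, (a) remove the ℓ points of D farthest from their nearest centroid in C_{i−1} to form outlier set L_i, (b) assign each remaining point to its nearest centroid, and (c) replace each centroid by the mean of its assigned points to obtain C_i. Then E(D, C_i, L_i) ≤ E(D, C_{i−1}, L_{i−1}), where E(D, C, L) = Σ_{x ∈ D\L} min_{c∈C} ‖x−c‖² and L_{i−1} is the outlier set from the previous iteration (each cluster assumed nonempty after assignment). -/

import Mathlib

open Finset

lemma mean_min_aux {E : Type*} [NormedAddCommGroup E] [InnerProductSpace ℝ E]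
    (S : Finset E) (hS : S.Nonempty) (c : E) :
    ∑ x ∈ S, ‖x - (S.card : ℝ)⁻¹ • ∑ y ∈ S, y‖ ^ 2 ≤ ∑ x ∈ S, ‖x - c‖ ^ 2 := by
  set μ : E := (S.card : ℝ)⁻¹ • ∑ y ∈ S, y with hμdef
  have hcard : (S.card : ℝ) ≠ 0 := Nat.cast_ne_zero.mpr hS.card_ne_zero
  have hμ : (S.card : ℝ) • μ = ∑ y ∈ S, y := by
    rw [hμdef, smul_smul, mul_inv_cancel₀ hcard, one_smul]
  have hzero : ∑ x ∈ S, (x - μ) = 0 := by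
    rw [Finset.sum_sub_distrib, Finset.sum_const, ← hμ]
    simp [← Nat.cast_smul_eq_nsmul ℝ]
  have key : ∀ x ∈ S, ‖x - c‖ ^ 2
      = ‖x - μ‖ ^ 2 + 2 * inner ℝ (x - μ) (μ - c) + ‖μ - c‖ ^ 2 := by
    intro x _
    rw [show x - c = (x - μ) + (μ - c) by abel]
    exact norm_add_sq_real _ _
  rw [Finset.sum_congr rfl key, Finset.sum_add_distrib, Finset.sum_add_distrib]
  have h2 : ∑ x ∈ S, 2 * (inner ℝ (x - μ) (μ - c) : ℝ) = 0 := by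
    rw [← Finset.mul_sum, ← sum_inner, hzero, inner_zero_left, mul_zero]
  rw [h2, add_zero]
  have : (0:ℝ) ≤ ∑ _x ∈ S, ‖μ - c‖ ^ 2 := Finset.sum_nonneg fun _ _ => sq_nonneg _
  linarith

lemma inf_sq_eq {k : ℕ} (hne : (Finset.univ : Finset (Fin k)).Nonempty)
    (f : Fin k → ℝ) (hf : ∀ j, 0 ≤ f j) :
    Finset.univ.inf' hne (fun j => f j ^ 2) = (Finset.univ.inf' hne f) ^ 2 := by
  apply le_antisymm
  · obtain ⟨j1, _, h1⟩ := Finset.exists_mem_eq_inf' hne f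
    rw [h1]
    exact Finset.inf'_le _ (Finset.mem_univ j1)
  · obtain ⟨j2, _, h2⟩ := Finset.exists_mem_eq_inf' hne (fun j => f j ^ 2)
    rw [h2]
    have h0 : 0 ≤ Finset.univ.inf' hne f := by
      obtain ⟨j1, _, h1⟩ := Finset.exists_mem_eq_inf' hne f
      rw [h1]; exact hf j1
    exact pow_le_pow_left₀ h0 (Finset.inf'_le _ (Finset.mem_univ j2)) 2


/-- Monotone decrease of the k-means-- / COD-Means objective over one full iteration:
given centroids `Cprev`, remove the `ℓ` points farthest from their nearest centroid
(forming `Li`), assign each remaining point to its nearest centroid (`g`), and update each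
centroid to the mean of its cluster (`Cnew`, each cluster nonempty). Then
`E(D, Cnew, Li) ≤ E(D, Cprev, Lprev)` where
`E(D, C, L) = Σ_{x ∈ D\L} min_j ‖x − c_j‖²`. -/
theorem cod_means_iteration_nonincreasing (d k ℓ : ℕ)
    [DecidableEq (EuclideanSpace ℝ (Fin d))]
    (hne : (Finset.univ : Finset (Fin k)).Nonempty)
    (D : Finset (EuclideanSpace ℝ (Fin d)))
    (Cprev Cnew : Fin k → EuclideanSpace ℝ (Fin d))
    (Lprev Li : Finset (EuclideanSpace ℝ (Fin d)))
    (hLprevD : Lprev ⊆ D) (hLiD : Li ⊆ D)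
    (hLprev : Lprev.card = ℓ) (hLi : Li.card = ℓ)
    -- (a) `Li` consists of the ℓ points of `D` farthest from their nearest centroid in `Cprev`
    (hfar : ∀ x ∈ Li, ∀ y ∈ D \ Li,
      Finset.univ.inf' hne (fun j => ‖y - Cprev j‖) ≤
        Finset.univ.inf' hne (fun j => ‖x - Cprev j‖))
    (g : EuclideanSpace ℝ (Fin d) → Fin k)
    -- (b) each remaining point is assigned to its nearest centroid of `Cprev`
    (hnearest : ∀ x ∈ D \ Li, ∀ j : Fin k, ‖x - Cprev (g x)‖ ≤ ‖x - Cprev j‖)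
    -- each cluster is nonempty after assignment
    (hclus : ∀ j : Fin k, ((D \ Li).filter (fun x => g x = j)).Nonempty)
    -- (c) each new centroid is the mean of the points assigned to it
    (hmean : ∀ j : Fin k, Cnew j =
      (((D \ Li).filter (fun x => g x = j)).card : ℝ)⁻¹ •
        ∑ x ∈ (D \ Li).filter (fun x => g x = j), x) :
    ∑ x ∈ D \ Li, Finset.univ.inf' hne (fun j => ‖x - Cnew j‖ ^ 2) ≤
      ∑ x ∈ D \ Lprev, Finset.univ.inf' hne (fun j => ‖x - Cprev j‖ ^ 2) := by
  -- the objective with respect to Cprev, as a function of a point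
  set F : EuclideanSpace ℝ (Fin d) → ℝ :=
    fun x => Finset.univ.inf' hne (fun j => ‖x - Cprev j‖ ^ 2) with hF
  have hFsq : ∀ x, F x = (Finset.univ.inf' hne (fun j => ‖x - Cprev j‖)) ^ 2 := fun x =>
    inf_sq_eq hne _ (fun j => norm_nonneg _)
  have hFnonneg : ∀ x, 0 ≤ F x := fun x => by rw [hFsq]; exact sq_nonneg _
  -- Step A+B+C: new objective on D \ Li ≤ old objective on D \ Li
  have step1 : ∑ x ∈ D \ Li, Finset.univ.inf' hne (fun j => ‖x - Cnew j‖ ^ 2)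
      ≤ ∑ x ∈ D \ Li, F x := by
    have hA : ∀ x ∈ D \ Li,
        Finset.univ.inf' hne (fun j => ‖x - Cnew j‖ ^ 2) ≤ ‖x - Cnew (g x)‖ ^ 2 :=
      fun x _ => Finset.inf'_le _ (Finset.mem_univ _)
    have hC : ∀ x ∈ D \ Li, ‖x - Cprev (g x)‖ ^ 2 = F x := by
      intro x hx
      rw [hFsq]
      congr 1
      refine le_antisymm ?_ (Finset.inf'_le _ (Finset.mem_univ _))
      exact Finset.le_inf' _ _ fun j _ => hnearest x hx j
    calc ∑ x ∈ D \ Li, Finset.univ.inf' hne (fun j => ‖x - Cnew j‖ ^ 2)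
        ≤ ∑ x ∈ D \ Li, ‖x - Cnew (g x)‖ ^ 2 := Finset.sum_le_sum hA
      _ ≤ ∑ x ∈ D \ Li, ‖x - Cprev (g x)‖ ^ 2 := by
          rw [← Finset.sum_fiberwise (D \ Li) g (fun x => ‖x - Cnew (g x)‖ ^ 2),
            ← Finset.sum_fiberwise (D \ Li) g (fun x => ‖x - Cprev (g x)‖ ^ 2)]
          refine Finset.sum_le_sum fun j _ => ?_
          have hcongr : ∀ (C : Fin k → EuclideanSpace ℝ (Fin d)),
              ∑ x ∈ (D \ Li).filter (fun x => g x = j), ‖x - C (g x)‖ ^ 2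
              = ∑ x ∈ (D \ Li).filter (fun x => g x = j), ‖x - C j‖ ^ 2 := by
            intro C
            refine Finset.sum_congr rfl fun x hx => ?_
            rw [(Finset.mem_filter.mp hx).2]
          rw [hcongr, hcongr, hmean j]
          exact mean_min_aux _ (hclus j) _
      _ = ∑ x ∈ D \ Li, F x := Finset.sum_congr rfl hC
  refine step1.trans ?_
  -- Step D: exchange argument
  have hDLi : D \ Li = (D \ (Li ∪ Lprev)) ∪ (Lprev \ Li) := by
    ext x
    simp only [Finset.mem_sdiff, Finset.mem_union]
    constructor
    · rintro ⟨hxD, hxLi⟩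
      by_cases h : x ∈ Lprev
      · exact Or.inr ⟨h, hxLi⟩
      · exact Or.inl ⟨hxD, fun hc => hc.elim hxLi h⟩
    · rintro (⟨hxD, h⟩ | ⟨hxP, hxLi⟩)
      · exact ⟨hxD, fun hc => h (Or.inl hc)⟩
      · exact ⟨hLprevD hxP, hxLi⟩
  have hDLp : D \ Lprev = (D \ (Li ∪ Lprev)) ∪ (Li \ Lprev) := by
    ext x
    simp only [Finset.mem_sdiff, Finset.mem_union]
    constructor
    · rintro ⟨hxD, hxLp⟩
      by_cases h : x ∈ Li
      · exact Or.inr ⟨h, hxLp⟩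
      · exact Or.inl ⟨hxD, fun hc => hc.elim h hxLp⟩
    · rintro (⟨hxD, h⟩ | ⟨hxI, hxLp⟩)
      · exact ⟨hxD, fun hc => h (Or.inr hc)⟩
      · exact ⟨hLiD hxI, hxLp⟩
  have hdisj1 : Disjoint (D \ (Li ∪ Lprev)) (Lprev \ Li) := by
    refine Finset.disjoint_left.mpr fun x hx hx' => ?_
    exact (Finset.mem_sdiff.mp hx).2 (Finset.mem_union_right _ (Finset.mem_sdiff.mp hx').1)
  have hdisj2 : Disjoint (D \ (Li ∪ Lprev)) (Li \ Lprev) := by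
    refine Finset.disjoint_left.mpr fun x hx hx' => ?_
    exact (Finset.mem_sdiff.mp hx).2 (Finset.mem_union_left _ (Finset.mem_sdiff.mp hx').1)
  rw [hDLi, hDLp, Finset.sum_union hdisj1, Finset.sum_union hdisj2]
  refine add_le_add le_rfl ?_
  -- Σ_{Lprev \ Li} F ≤ Σ_{Li \ Lprev} F
  have hcardeq : (Lprev \ Li).card = (Li \ Lprev).card := by
    have h1 := Finset.card_sdiff_add_card_inter Lprev Li
    have h2 := Finset.card_sdiff_add_card_inter Li Lprev
    rw [Finset.inter_comm] at h2
    omega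
  rcases Finset.eq_empty_or_nonempty (Li \ Lprev) with hB | hB
  · have hA : Lprev \ Li = ∅ := Finset.card_eq_zero.mp (by rw [hcardeq, hB]; simp)
    simp [hA, hB]
  · have hle : ∀ y ∈ Lprev \ Li, ∀ x ∈ Li \ Lprev, F y ≤ F x := by
      intro y hy x hx
      have hyD : y ∈ D \ Li := by
        rcases Finset.mem_sdiff.mp hy with ⟨h1, h2⟩
        exact Finset.mem_sdiff.mpr ⟨hLprevD h1, h2⟩
      have := hfar x (Finset.mem_sdiff.mp hx).1 y hyD
      rw [hFsq, hFsq]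
      exact pow_le_pow_left₀ (Finset.le_inf' hne _ fun j _ => norm_nonneg _) this 2
    calc ∑ y ∈ Lprev \ Li, F y
        ≤ (Lprev \ Li).card • ((Li \ Lprev).inf' hB F) := by
          refine Finset.sum_le_card_nsmul _ _ _ fun y hy => ?_
          exact Finset.le_inf' hB _ fun x hx => hle y hy x hx
      _ = (Li \ Lprev).card • ((Li \ Lprev).inf' hB F) := by rw [hcardeq]
      _ ≤ ∑ x ∈ Li \ Lprev, F x :=
          Finset.card_nsmul_le_sum _ _ _ fun x hx => Finset.inf'_le _ hx
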